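/- arXiv:2303.04775 — 2 statements merged into one kernel-verified Lean document; each statement's English description precedes it below -/
import Mathlib

section
/- Let k > 0, φ ≥ 0, ν ∈ (0,1). The function h(x,t) = x^(ν/2) e^(−φ t) satisfies h(x,0) = x^(ν/2), h(0,t)=0, and ∂h/∂t = k ∂/∂x ( h · ∂^ν h/∂x^ν ) − φ h for all x > 0, t > 0. -/
/-!
The substitution `s = z u` shows that the Caputo derivative of `x ^ β` is a constant multiple of
`x ^ (β - ν)`. For `β = ν / 2` the product `x ^ (ν / 2) * ∂^ν (x ^ (ν / 2))` is therefore constant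
in `x`, so the flux term of the equation vanishes and only `∂h/∂t = -φ h` remains.
-/

/-- Caputo fractional derivative of order `ν` with zero starting point. -/
noncomputable def caputo (ν : ℝ) (f : ℝ → ℝ) (z : ℝ) : ℝ :=
  (Real.Gamma (1 - ν))⁻¹ * ∫ s in (0:ℝ)..z, (z - s) ^ (-ν) * deriv f s

open Real intervalIntegral

theorem integral_sub_rpow_mul_rpow_eq_rpow_mul (a b : ℝ) {z : ℝ} (hz : 0 < z) :
    ∫ s in (0:ℝ)..z, (z - s) ^ a * s ^ b
      = z ^ (a + b + 1) * ∫ u in (0:ℝ)..1, (1 - u) ^ a * u ^ b := by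
  have hscale := smul_integral_comp_mul_left (f := fun s => (z - s) ^ a * s ^ b) (a := 0) (b := 1) z
  rw [mul_zero, mul_one, smul_eq_mul] at hscale
  rw [← hscale, ← integral_const_mul, ← integral_const_mul]
  refine integral_congr fun u hu => ?_
  rw [Set.uIcc_of_le zero_le_one] at hu
  have hsub : z - z * u = z * (1 - u) := by ring
  rw [hsub, mul_rpow hz.le (by linarith [hu.2]), mul_rpow hz.le hu.1, rpow_add hz,
    rpow_add hz, rpow_one]
  ring

/-- Where the integral converges it is the Beta function `B(1 - ν, β)`, and the constant is
`Γ(β + 1) / Γ(β + 1 - ν)`; below only its independence of the evaluation point matters. -/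
noncomputable def caputoRpowConst (ν β : ℝ) : ℝ :=
  (Gamma (1 - ν))⁻¹ * β * ∫ u in (0:ℝ)..1, (1 - u) ^ (-ν) * u ^ (β - 1)

theorem caputo_rpow (ν β : ℝ) {z : ℝ} (hz : 0 < z) :
    caputo ν (fun x => x ^ β) z = caputoRpowConst ν β * z ^ (β - ν) := by
  have hexp : -ν + (β - 1) + 1 = β - ν := by ring
  simp only [caputo, Real.deriv_rpow_const, mul_left_comm _ β, integral_const_mul]
  rw [integral_sub_rpow_mul_rpow_eq_rpow_mul _ _ hz, hexp, caputoRpowConst]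
  ring

theorem caputo_mul_const (ν c : ℝ) (f : ℝ → ℝ) (z : ℝ) :
    caputo ν (fun x => f x * c) z = caputo ν f z * c := by
  simp only [caputo, deriv_mul_const_field, ← mul_assoc, integral_mul_const]

theorem rpow_half_mul_caputo_rpow_half (ν : ℝ) {z : ℝ} (hz : 0 < z) :
    z ^ (ν / 2) * caputo ν (fun x => x ^ (ν / 2)) z = caputoRpowConst ν (ν / 2) := by
  have hexp : ν / 2 + (ν / 2 - ν) = 0 := by ring
  rw [caputo_rpow ν _ hz, mul_left_comm, ← rpow_add hz, hexp, rpow_zero, mul_one]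

theorem deriv_rpow_half_mul_caputo_rpow_half (ν : ℝ) {x : ℝ} (hx : 0 < x) :
    deriv (fun ξ => ξ ^ (ν / 2) * caputo ν (fun y => y ^ (ν / 2)) ξ) x = 0 := by
  have hconst : (fun ξ => ξ ^ (ν / 2) * caputo ν (fun y => y ^ (ν / 2)) ξ)
      =ᶠ[nhds x] fun _ => caputoRpowConst ν (ν / 2) :=
    Filter.eventually_of_mem (Ioi_mem_nhds hx) fun _ hξ => rpow_half_mul_caputo_rpow_half ν hξ
  rw [hconst.deriv_eq, deriv_const]

theorem unsteady_space_fractional_solution_general (k φ ν : ℝ)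
    (hν : ν ∈ Set.Ioo (0:ℝ) 1)
    (h : ℝ → ℝ → ℝ) (hdef : h = fun x t => x ^ (ν / 2) * Real.exp (-φ * t)) :
    (∀ x, h x 0 = x ^ (ν / 2)) ∧ (∀ t, h 0 t = 0) ∧
      ∀ x > (0:ℝ), ∀ t > (0:ℝ),
        deriv (fun τ => h x τ) t
          = k * deriv (fun ξ => h ξ t * caputo ν (fun ξ' => h ξ' t) ξ) x - φ * h x t := by
  subst hdef
  refine ⟨fun x => by simp, fun t => by simp [zero_rpow (half_pos hν.1).ne'], ?_⟩
  intro x hx t _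
  set c := exp (-φ * t)
  have htime : HasDerivAt (fun τ => x ^ (ν / 2) * exp (-φ * τ)) (x ^ (ν / 2) * (c * -φ)) t := by
    simpa [c] using (((hasDerivAt_id t).const_mul (-φ)).exp).const_mul (x ^ (ν / 2))
  have hflux : deriv (fun ξ => ξ ^ (ν / 2) * c * caputo ν (fun ξ' => ξ' ^ (ν / 2) * c) ξ) x = 0 := by
    simp_rw [caputo_mul_const, mul_mul_mul_comm _ c, mul_comm _ (c * c)]
    rw [deriv_const_mul_field, deriv_rpow_half_mul_caputo_rpow_half ν hx, mul_zero]
  rw [htime.deriv, hflux]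
  ring

theorem unsteady_space_fractional_solution (k φ ν : ℝ) (hk : 0 < k) (hφ : 0 ≤ φ)
    (hν : ν ∈ Set.Ioo (0:ℝ) 1)
    (h : ℝ → ℝ → ℝ) (hdef : h = fun x t => x ^ (ν / 2) * Real.exp (-φ * t)) :
    (∀ x, h x 0 = x ^ (ν / 2)) ∧ (∀ t, h 0 t = 0) ∧
      ∀ x > (0:ℝ), ∀ t > (0:ℝ),
        deriv (fun τ => h x τ) t
          = k * deriv (fun ξ => h ξ t * caputo ν (fun ξ' => h ξ' t) ξ) x - φ * h x t :=
  unsteady_space_fractional_solution_general k φ ν hν h hdef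
end

section
/- For ν ∈ (0,1) and scalars c₁, c₂, the operator F[h] = k ∂/∂x ( h · ∂^ν h/∂x^ν ) − φ h maps h(x) = c₁ x^(ν+1) + c₂ to F[h](x) = ( k Γ(ν+3) c₁² − φ c₁ ) x^(ν+1) + ( k Γ(ν+2) c₁ c₂ − φ c₂ ); in particular the subspace spanned by { x^(ν+1), 1 } is invariant under F. -/
open Real intervalIntegral Filter Topology

theorem integral_rpow_mul_sub_rpow {a b z : ℝ} (ha : 0 < a) (hb : 0 < b) (hz : 0 < z) :
    ∫ s in (0:ℝ)..z, s ^ (a - 1) * (z - s) ^ (b - 1)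
      = z ^ (a + b - 1) * (Gamma a * Gamma b / Gamma (a + b)) := by
  have hbeta := Complex.Gamma_mul_Gamma_eq_betaIntegral
    (s := (a : ℂ)) (t := (b : ℂ)) (by simpa using ha) (by simpa using hb)
  have hscaled := Complex.betaIntegral_scaled (a : ℂ) b hz
  rw [← Complex.ofReal_inj]
  push_cast
  rw [← Complex.Gamma_ofReal, ← Complex.Gamma_ofReal, ← Complex.Gamma_ofReal,
    ← integral_ofReal]
  have hcast : Set.EqOn (fun s : ℝ => ((s ^ (a - 1) * (z - s) ^ (b - 1) : ℝ) : ℂ))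
      (fun s : ℝ => (s : ℂ) ^ ((a : ℂ) - 1) * ((z : ℂ) - s) ^ ((b : ℂ) - 1)) (Set.uIcc 0 z) := by
    intro s hs
    rw [Set.uIcc_of_le hz.le] at hs
    push_cast [Complex.ofReal_cpow hs.1, Complex.ofReal_cpow (sub_nonneg.2 hs.2)]
    rfl
  rw [integral_congr hcast, hscaled, Complex.ofReal_cpow hz.le, hbeta, Complex.ofReal_add]
  have hGab : Complex.Gamma ((a : ℂ) + b) ≠ 0 :=
    Complex.Gamma_ne_zero_of_re_pos (by simp; linarith)
  push_cast
  field_simp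

theorem caputo_const_mul_rpow_add_const {ν p z : ℝ} (hν : ν < 1) (hp : 0 < p) (hz : 0 < z)
    (c d : ℝ) :
    caputo ν (fun x => c * x ^ p + d) z
      = c * (Gamma (p + 1) / Gamma (p + 1 - ν)) * z ^ (p - ν) := by
  have hν' : 0 < 1 - ν := by linarith
  have hintegrand : ∀ s, (z - s) ^ (-ν) * deriv (fun x : ℝ => c * x ^ p + d) s
      = c * p * (s ^ (p - 1) * (z - s) ^ ((1 - ν) - 1)) := by
    intro s
    rw [deriv_add_const, deriv_const_mul_field, Real.deriv_rpow_const, sub_sub_cancel_left]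
    ring
  simp only [caputo, hintegrand, integral_const_mul, integral_rpow_mul_sub_rpow hp hν' hz,
    Gamma_add_one hp.ne']
  rw [show p + (1 - ν) = p + 1 - ν by ring, show p + 1 - ν - 1 = p - ν by ring]
  field_simp [(Gamma_pos_of_pos hν').ne']

theorem caputo_const_mul_rpow_succ_add_const {ν z : ℝ} (hν : ν ∈ Set.Ioo (-1 : ℝ) 1) (hz : 0 < z)
    (c d : ℝ) :
    caputo ν (fun x => c * x ^ (ν + 1) + d) z = c * Gamma (ν + 2) * z := by
  rw [caputo_const_mul_rpow_add_const hν.2 (by linarith [hν.1]) hz]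
  simp [add_assoc, one_add_one_eq_two]

theorem deriv_mul_caputo_const_mul_rpow_succ_add_const {ν x : ℝ} (hν : ν ∈ Set.Ioo (-1 : ℝ) 1)
    (hx : 0 < x) (c d : ℝ) :
    deriv (fun ξ => (c * ξ ^ (ν + 1) + d) * caputo ν (fun x => c * x ^ (ν + 1) + d) ξ) x
      = c ^ 2 * Gamma (ν + 3) * x ^ (ν + 1) + c * d * Gamma (ν + 2) := by
  have hprod : (fun ξ => (c * ξ ^ (ν + 1) + d) * caputo ν (fun x => c * x ^ (ν + 1) + d) ξ)
      =ᶠ[𝓝 x] fun ξ => c ^ 2 * Gamma (ν + 2) * ξ ^ (ν + 2) + c * d * Gamma (ν + 2) * ξ := by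
    filter_upwards [Ioi_mem_nhds hx] with ξ hξ
    rw [caputo_const_mul_rpow_succ_add_const hν hξ, show ν + 2 = ν + 1 + 1 by ring,
      rpow_add_one hξ.ne' (ν + 1)]
    ring
  have hderiv :
      HasDerivAt (fun ξ => c ^ 2 * Gamma (ν + 2) * ξ ^ (ν + 2) + c * d * Gamma (ν + 2) * ξ)
      (c ^ 2 * Gamma (ν + 2) * ((ν + 2) * x ^ (ν + 2 - 1)) + c * d * Gamma (ν + 2) * 1) x :=
    ((hasDerivAt_rpow_const (Or.inr (by linarith [hν.1]))).const_mul _).add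
      ((hasDerivAt_id' x).const_mul _)
  rw [hprod.deriv_eq, hderiv.deriv, show ν + 3 = ν + 2 + 1 by ring,
    Gamma_add_one (by linarith [hν.1]), show ν + 2 - 1 = ν + 1 by ring]
  ring

theorem invariant_subspace_two_dim (k φ ν : ℝ) (hν : ν ∈ Set.Ioo (0:ℝ) 1)
    (F : (ℝ → ℝ) → ℝ → ℝ)
    (hF : F = fun h x => k * deriv (fun ξ => h ξ * caputo ν h ξ) x - φ * h x)
    (c₁ c₂ : ℝ) :
    ∀ x > (0:ℝ),
      F (fun x => c₁ * x ^ (ν + 1) + c₂) x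
        = (k * Real.Gamma (ν + 3) * c₁ ^ 2 - φ * c₁) * x ^ (ν + 1)
            + (k * Real.Gamma (ν + 2) * c₁ * c₂ - φ * c₂) := by
  intro x hx
  rw [hF]
  dsimp only
  rw [deriv_mul_caputo_const_mul_rpow_succ_add_const ⟨by linarith [hν.1], hν.2⟩ hx]
  ring
end
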